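/- arXiv:math-ph/0506036 — 2 statements merged into one kernel-verified Lean document; each statement's English description precedes it below -/
import Mathlib

section
/- The map χ_N sending E_{μ+Nr} ↦ (-1)^{(μ₁+1)r₂ + (μ₂+1)r₁ + Nr₁r₂} L_μ (for 0 ≤ μ₁,μ₂ ≤ N-1, μ ≠ (0,0)) and E_{Nr} ↦ 0 extends linearly to a Lie algebra homomorphism from span{E_m : m ∈ ℤ×ℤ} with the bracket {E_m, E_n} = (N/π) sin((π/N)(m×n)) E_{m+n} onto sl(N,ℂ). -/
open Matrix Complex

/-- The clock matrix `S = √ω · diag(1, ω, ω², …, ω^{N-1})` with `ω = exp(2πi/N)`,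
`√ω = exp(πi/N)`. -/
noncomputable def clockS (N : ℕ) : Matrix (Fin N) (Fin N) ℂ :=
  Matrix.diagonal fun k =>
    Complex.exp (Real.pi * Complex.I / N) * Complex.exp (2 * Real.pi * Complex.I / N) ^ (k : ℕ)

/-- The shift matrix `T` with `T_{j,j+1} = 1` (j = 1,…,N-1), `T_{N,1} = -1`,
all other entries zero. -/
def shiftT (N : ℕ) : Matrix (Fin N) (Fin N) ℂ :=
  Matrix.of fun j k =>
    if (j : ℕ) + 1 = (k : ℕ) then 1
    else if (j : ℕ) = N - 1 ∧ (k : ℕ) = 0 then -1 else 0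

/-- Integer power of a square matrix (negative exponents via the nonsingular inverse). -/
noncomputable def mzpow {N : ℕ} (A : Matrix (Fin N) (Fin N) ℂ) (z : ℤ) :
    Matrix (Fin N) (Fin N) ℂ :=
  if 0 ≤ z then A ^ z.toNat else A⁻¹ ^ (-z).toNat

/-- `L_m = (iN/2π) ω^{m₁m₂/2} S^{m₁} T^{m₂}`, where `ω^{x/2} = exp(πix/N)`. -/
noncomputable def Lmat (N : ℕ) (m : ℤ × ℤ) : Matrix (Fin N) (Fin N) ℂ :=
  (Complex.I * N / (2 * Real.pi)) •
    (Complex.exp (Real.pi * Complex.I * ((m.1 * m.2 : ℤ) : ℂ) / N) •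
      (mzpow (clockS N) m.1 * mzpow (shiftT N) m.2))

/-- The Moyal bracket at `ℏ = 2π/N` on the free `ℂ`-vector space with basis
`{E_m : m ∈ ℤ×ℤ}`: `{E_m, E_n} = (N/π) sin((π/N)(m₁n₂ - m₂n₁)) E_{m+n}`,
extended bilinearly. -/
noncomputable def trigBracket (N : ℕ) (x y : (ℤ × ℤ) →₀ ℂ) : (ℤ × ℤ) →₀ ℂ :=
  x.sum fun m a => y.sum fun n b =>
    Finsupp.single (m + n)
      (a * b * (((N : ℂ) / (Real.pi : ℂ)) *
        Complex.sin ((Real.pi : ℂ) / N * ((m.1 * n.2 - m.2 * n.1 : ℤ) : ℂ))))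

/-!
The clock and shift matrices satisfy `S ^ N = T ^ N = -1` and `T S = ω S T`, where
`ω = e^{2πi/N}` is a primitive `N`-th root of unity. Hence
`L_m L_n = (iN/2π) e^{iπ(m₂n₁ - m₁n₂)/N} L_{m+n}`; antisymmetrising gives exactly the Moyal
structure constant `(N/π) sin((π/N)(m × n))`, and `L_{m+Nr} = ± L_m`.

`χ_N` sends `E_m` to `L_m`, or to `0` when `m ∈ Nℤ²`. It respects brackets because
`sin((π/N)(m × n))` vanishes as soon as one of `m`, `n`, `m + n` lies in `Nℤ²`. The matrices
`S^a T^b` with `0 ≤ a, b < N`, `(a, b) ≠ 0`, are traceless (their traces are geometric sums of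
roots of unity), and together with `1` they span all matrices by discrete Fourier inversion
along the diagonal; so the image of `χ_N` is exactly `sl(N, ℂ)`.
-/

theorem zpow_mul_zpow_of_mul_eq_mul_mul {G : Type*} [Group G] {s t v : G}
    (hv : ∀ g, Commute v g) (h : t * s = v * s * t) (a b : ℤ) :
    t ^ b * s ^ a = v ^ (a * b) * s ^ a * t ^ b := by
  have hts : t * s ^ a = v ^ a * s ^ a * t := by
    rw [← (hv s).mul_zpow]; exact SemiconjBy.zpow_right h a
  have hst : SemiconjBy (s ^ a) t (v ^ (-a) * t) := by
    rw [SemiconjBy, mul_assoc, hts, _root_.zpow_neg]; group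
  have hst' : s ^ a * t ^ b = v ^ (-(a * b)) * (t ^ b * s ^ a) := by
    rw [(hst.zpow_right b).eq, ((hv t).zpow_left (-a)).mul_zpow, ← _root_.zpow_mul, neg_mul,
      mul_assoc]
  rw [mul_assoc, hst', ← mul_assoc, ← _root_.zpow_add, add_neg_cancel, zpow_zero, one_mul]

section AlgebraUnits

variable {K A : Type*} [Field K] [Ring A] [Algebra K A]

private theorem val_zpow_map_algebraMap (c : Kˣ) (z : ℤ) :
    ((Units.map (algebraMap K A : K →* A) c ^ z : Aˣ) : A) = algebraMap K A ((c : K) ^ z) := by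
  rw [← map_zpow, Units.coe_map, Units.val_zpow_eq_zpow_val]
  rfl

theorem Units.val_zpow_add_mul_of_pow_eq {u : Aˣ} {c : K} (hc : c ≠ 0) {n : ℕ}
    (h : (u : A) ^ n = algebraMap K A c) (a r : ℤ) :
    ((u ^ (a + n * r) : Aˣ) : A) = c ^ r • ((u ^ a : Aˣ) : A) := by
  have hu : u ^ n = Units.map (algebraMap K A : K →* A) (Units.mk0 c hc) := Units.ext h
  rw [_root_.zpow_add, _root_.zpow_mul, zpow_natCast, hu, Units.val_mul, val_zpow_map_algebraMap,
    ← Algebra.commutes, ← Algebra.smul_def, Units.val_mk0]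

theorem Units.val_zpow_mul_val_zpow_of_mul_eq_smul {s t : Aˣ} {c : K} (hc : c ≠ 0)
    (h : (t * s : A) = c • (s * t : A)) (a b : ℤ) :
    ((t ^ b : Aˣ) : A) * ((s ^ a : Aˣ) : A) =
      c ^ (a * b) • (((s ^ a : Aˣ) : A) * ((t ^ b : Aˣ) : A)) := by
  set v := Units.map (algebraMap K A : K →* A) (Units.mk0 c hc)
  have hv : ∀ g, Commute v g := fun g => Units.ext (Algebra.commutes c (g : A))
  have hts : t * s = v * s * t := Units.ext <| by
    rw [Units.val_mul, h, Units.val_mul, Units.val_mul, mul_assoc, Algebra.smul_def]; rfl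
  rw [← Units.val_mul, zpow_mul_zpow_of_mul_eq_mul_mul hv hts, mul_assoc, Units.val_mul,
    val_zpow_map_algebraMap, ← Algebra.smul_def, Units.val_mk0, Units.val_mul]

end AlgebraUnits

theorem isUnit_of_pow_eq_neg_one {R : Type*} [Ring R] {a : R} {n : ℕ} (hn : n ≠ 0)
    (h : a ^ n = -1) : IsUnit a :=
  IsUnit.of_pow_eq_one (n := 2 * n) (by rw [pow_mul', h, neg_one_sq]) (by omega)

theorem geom_sum_eq_zero_of_pow_eq_one {K : Type*} [DivisionRing K] {x : K} {n : ℕ}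
    (hx : x ≠ 1) (h : x ^ n = 1) : ∑ i ∈ Finset.range n, x ^ i = 0 := by
  rw [geom_sum_eq hx, h, sub_self, zero_div]

private theorem Nat.mod_eq_ite_of_lt_two_mul {x N : ℕ} (h : x < 2 * N) :
    x % N = if x < N then x else x - N := by
  split_ifs with hx
  · exact Nat.mod_eq_of_lt hx
  · rw [Nat.mod_eq_sub_mod (by omega), Nat.mod_eq_of_lt (by omega)]

theorem Matrix.mem_of_sup_span_one_eq_top_of_trace_eq_zero {n K : Type*} [Fintype n]
    [DecidableEq n] [Nonempty n] [Field K] [CharZero K] {U : Submodule K (Matrix n n K)}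
    (hU : ∀ A ∈ U, trace A = 0) (htop : U ⊔ K ∙ 1 = ⊤) {A : Matrix n n K}
    (hA : trace A = 0) : A ∈ U := by
  obtain ⟨B, hB, C, hC, rfl⟩ := Submodule.mem_sup.mp (htop ▸ Submodule.mem_top : A ∈ U ⊔ K ∙ 1)
  obtain ⟨c, rfl⟩ := Submodule.mem_span_singleton.mp hC
  rw [trace_add, hU B hB, zero_add, trace_smul, trace_one, smul_eq_mul, mul_eq_zero,
    Nat.cast_eq_zero] at hA
  rcases hA with rfl | hcard
  · simpa using hB
  · exact absurd hcard Fintype.card_ne_zero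

noncomputable def moyalCoeff (N : ℕ) (m n : ℤ × ℤ) : ℂ :=
  (N / Real.pi : ℂ) * Complex.sin (Real.pi / N * ((m.1 * n.2 - m.2 * n.1 : ℤ) : ℂ))

theorem linearCombination_trigBracket {N : ℕ} {A : Type*} [Ring A] [Algebra ℂ A] {g : ℤ × ℤ → A}
    (hg : ∀ m n, g m * g n - g n * g m = moyalCoeff N m n • g (m + n))
    (x y : (ℤ × ℤ) →₀ ℂ) :
    Finsupp.linearCombination ℂ g (trigBracket N x y) =
      Finsupp.linearCombination ℂ g x * Finsupp.linearCombination ℂ g y -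
        Finsupp.linearCombination ℂ g y * Finsupp.linearCombination ℂ g x := by
  simp only [trigBracket, map_finsuppSum, Finsupp.linearCombination_single]
  simp only [Finsupp.linearCombination_apply, Finsupp.sum_mul, Finsupp.mul_sum,
    smul_mul_smul_comm]
  rw [Finsupp.sum_comm y x]
  simp only [Finsupp.sum, ← Finset.sum_sub_distrib, mul_comm (y _) (x _), ← smul_sub, hg,
    smul_smul]
  rfl

theorem moyalCoeff_eq_zero_of_dvd {N : ℕ} [NeZero N] {m n : ℤ × ℤ}
    (h : (N : ℤ) ∣ m.1 * n.2 - m.2 * n.1) : moyalCoeff N m n = 0 := by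
  obtain ⟨c, hc⟩ := h
  rw [moyalCoeff, hc, Int.cast_mul, Int.cast_natCast, ← mul_assoc,
    div_mul_cancel₀ _ (NeZero.ne (N : ℂ)), mul_comm (Real.pi : ℂ), Complex.sin_int_mul_pi, mul_zero]

section ClockShift

variable {N : ℕ}

local notation "ω" => Complex.exp (2 * Real.pi * Complex.I / N)
local notation "ζ" => Complex.exp (Real.pi * Complex.I / N)

theorem shiftT_pow_apply {k : ℕ} (hk : k ≤ N) (j l : Fin N) :
    (shiftT N ^ k) j l =
      if ((j : ℕ) + k) % N = l then (if (j : ℕ) + k < N then 1 else -1) else 0 := by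
  induction k generalizing l with
  | zero => simp [Matrix.one_apply, Nat.mod_eq_of_lt j.isLt, Fin.ext_iff]
  | succ k ih =>
    have hj := j.isLt
    rw [pow_succ, Matrix.mul_apply,
      Fintype.sum_eq_single ⟨((j : ℕ) + k) % N, Nat.mod_lt _ (by omega)⟩]
    · rw [ih (by omega)]
      simp only [shiftT, Matrix.of_apply, if_true,
        Nat.mod_eq_ite_of_lt_two_mul (show (j : ℕ) + k < 2 * N by omega),
        Nat.mod_eq_ite_of_lt_two_mul (show (j : ℕ) + (k + 1) < 2 * N by omega)]
      split_ifs <;> first | omega | norm_num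
    · intro i hi
      rw [ih (by omega), if_neg (fun h => hi (Fin.ext h.symm)), zero_mul]

theorem shiftT_pow_self : shiftT N ^ N = -1 := by
  ext j l
  rw [shiftT_pow_apply le_rfl, Nat.add_mod_right, Nat.mod_eq_of_lt j.isLt,
    if_neg (show ¬((j : ℕ) + N < N) by omega), Matrix.neg_apply, Matrix.one_apply]
  simp only [Fin.ext_iff]
  split_ifs <;> norm_num

theorem single_mul_shiftT_pow {b : ℕ} (hb : b ≤ N) {j k : Fin N} (hk : ((j : ℕ) + b) % N = k) :
    Matrix.single j j 1 * shiftT N ^ b =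
      (if (j : ℕ) + b < N then 1 else -1 : ℂ) • Matrix.single j k 1 := by
  ext l l'
  by_cases hl : l = j
  · subst hl
    rw [Matrix.single_mul_apply_same, one_mul, shiftT_pow_apply hb, hk, Matrix.smul_apply,
      Matrix.single_apply]
    simp [Fin.ext_iff]
  · rw [Matrix.single_mul_apply_of_ne (h := hl), Matrix.smul_apply,
      Matrix.single_apply_of_row_ne (Ne.symm hl), smul_zero]

theorem mzpow_eq_zpow (A : Matrix (Fin N) (Fin N) ℂ) (z : ℤ) : mzpow A z = A ^ z := by
  unfold mzpow
  split_ifs with hz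
  · lift z to ℕ using hz
    simp
  · obtain ⟨n, rfl⟩ : ∃ n : ℕ, z = -n := ⟨(-z).toNat, by omega⟩
    simp [Matrix.zpow_neg_natCast, Matrix.inv_pow']

theorem mzpow_eq_val_zpow {A : Matrix (Fin N) (Fin N) ℂ} (hA : IsUnit A) (z : ℤ) :
    mzpow A z = ↑(hA.unit ^ z) := by
  rw [Matrix.coe_units_zpow, IsUnit.unit_spec, mzpow_eq_zpow]

theorem mzpow_add {A : Matrix (Fin N) (Fin N) ℂ} (hA : IsUnit A) (y z : ℤ) :
    mzpow A (y + z) = mzpow A y * mzpow A z := by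
  simp only [mzpow_eq_val_zpow hA, _root_.zpow_add, Units.val_mul]

theorem mzpow_add_mul_of_pow_eq_neg_one {A : Matrix (Fin N) (Fin N) ℂ} {n : ℕ} (hn : n ≠ 0)
    (h : A ^ n = -1) (a r : ℤ) : mzpow A (a + n * r) = (-1 : ℂ) ^ r • mzpow A a := by
  have hA := isUnit_of_pow_eq_neg_one hn h
  rw [mzpow_eq_val_zpow hA, mzpow_eq_val_zpow hA]
  exact Units.val_zpow_add_mul_of_pow_eq (neg_ne_zero.mpr one_ne_zero)
    (by rw [hA.unit_spec, h, map_neg, map_one]) a r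

theorem Lmat_natCast (a b : ℕ) :
    Lmat N (a, b) =
      (Complex.I * N / (2 * Real.pi) * Complex.exp (Real.pi * Complex.I * ((a * b : ℤ) : ℂ) / N)) •
        (clockS N ^ a * shiftT N ^ b) := by
  rw [Lmat, mzpow_eq_zpow, mzpow_eq_zpow, zpow_natCast, zpow_natCast, smul_smul]

variable [NeZero N]

variable (N) in
theorem isPrimitiveRoot_exp_two_pi_I_div : IsPrimitiveRoot ω N :=
  Complex.isPrimitiveRoot_exp N (NeZero.ne N)

theorem exp_pi_mul_I_div_pow : ζ ^ N = -1 := by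
  rw [← Complex.exp_nat_mul, mul_div_cancel₀ _ (NeZero.ne (N : ℂ)), Complex.exp_pi_mul_I]

theorem clockS_entry_pow_self (k : Fin N) : (ζ * ω ^ (k : ℕ)) ^ N = -1 := by
  rw [mul_pow, pow_right_comm, (isPrimitiveRoot_exp_two_pi_I_div N).pow_eq_one, one_pow,
    exp_pi_mul_I_div_pow, mul_one]

theorem clockS_pow_self : clockS N ^ N = -1 := by
  rw [clockS, Matrix.diagonal_pow, show (_ : Fin N → ℂ) ^ N = -1 from funext clockS_entry_pow_self,
    Pi.neg_def, ← Matrix.diagonal_neg, Matrix.diagonal_one']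

theorem shiftT_mul_clockS : shiftT N * clockS N = ω • (clockS N * shiftT N) := by
  ext j l
  rw [Matrix.smul_apply, clockS, Matrix.mul_diagonal, Matrix.diagonal_mul, shiftT,
    Matrix.of_apply, smul_eq_mul]
  split_ifs with h₁ h₂
  · rw [← h₁, pow_succ]; ring
  · have hω : ω ^ (N - 1) * ω = 1 := by
      rw [← pow_succ, Nat.sub_add_cancel (Nat.one_le_iff_ne_zero.mpr (NeZero.ne N)),
        (isPrimitiveRoot_exp_two_pi_I_div N).pow_eq_one]
    rw [h₂.1, h₂.2]
    linear_combination ζ * hω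
  · ring

theorem isUnit_clockS : IsUnit (clockS N) :=
  isUnit_of_pow_eq_neg_one (NeZero.ne N) clockS_pow_self

theorem isUnit_shiftT : IsUnit (shiftT N) :=
  isUnit_of_pow_eq_neg_one (NeZero.ne N) shiftT_pow_self

theorem mzpow_shiftT_mul_mzpow_clockS (a b : ℤ) :
    mzpow (shiftT N) b * mzpow (clockS N) a =
      ω ^ (a * b) • (mzpow (clockS N) a * mzpow (shiftT N) b) := by
  rw [mzpow_eq_val_zpow isUnit_clockS, mzpow_eq_val_zpow isUnit_shiftT]
  refine Units.val_zpow_mul_val_zpow_of_mul_eq_smul (Complex.exp_ne_zero _) ?_ a b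
  rw [isUnit_clockS.unit_spec, isUnit_shiftT.unit_spec, shiftT_mul_clockS]

theorem clockS_shiftT_mul_clockS_shiftT (m n : ℤ × ℤ) :
    (mzpow (clockS N) m.1 * mzpow (shiftT N) m.2) *
        (mzpow (clockS N) n.1 * mzpow (shiftT N) n.2) =
      ω ^ (n.1 * m.2) • (mzpow (clockS N) (m + n).1 * mzpow (shiftT N) (m + n).2) := by
  rw [mul_assoc, ← mul_assoc (mzpow (shiftT N) m.2), mzpow_shiftT_mul_mzpow_clockS,
    smul_mul_assoc, mul_smul_comm, Prod.fst_add, Prod.snd_add, mzpow_add isUnit_clockS,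
    mzpow_add isUnit_shiftT]
  noncomm_ring

theorem Lmat_mul (m n : ℤ × ℤ) :
    Lmat N m * Lmat N n =
      (Complex.I * N / (2 * Real.pi) *
          Complex.exp (Real.pi * Complex.I * ((m.2 * n.1 - m.1 * n.2 : ℤ) : ℂ) / N)) •
        Lmat N (m + n) := by
  have hexp : Complex.exp (Real.pi * Complex.I * ((m.1 * m.2 : ℤ) : ℂ) / N) *
        Complex.exp (Real.pi * Complex.I * ((n.1 * n.2 : ℤ) : ℂ) / N) *
        ω ^ (n.1 * m.2) =
      Complex.exp (Real.pi * Complex.I * ((m.2 * n.1 - m.1 * n.2 : ℤ) : ℂ) / N) *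
        Complex.exp (Real.pi * Complex.I * (((m + n).1 * (m + n).2 : ℤ) : ℂ) / N) := by
    rw [← Complex.exp_int_mul, ← Complex.exp_add, ← Complex.exp_add, ← Complex.exp_add]
    congr 1
    simp only [Prod.fst_add, Prod.snd_add]
    push_cast
    ring
  simp only [Lmat, smul_mul_smul_comm, clockS_shiftT_mul_clockS_shiftT, smul_smul]
  congr 1
  linear_combination (Complex.I * N / (2 * Real.pi)) ^ 2 * hexp

theorem Lmat_lie (m n : ℤ × ℤ) :
    Lmat N m * Lmat N n - Lmat N n * Lmat N m = moyalCoeff N m n • Lmat N (m + n) := by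
  rw [Lmat_mul, Lmat_mul, add_comm n m, ← sub_smul, moyalCoeff, Complex.sin]
  congr 1
  set z := (Real.pi : ℂ) / N * ((m.1 * n.2 - m.2 * n.1 : ℤ) : ℂ)
  have h₁ : Real.pi * Complex.I * ((m.2 * n.1 - m.1 * n.2 : ℤ) : ℂ) / N = -z * Complex.I := by
    simp only [z]; push_cast; ring
  have h₂ : Real.pi * Complex.I * ((n.2 * m.1 - n.1 * m.2 : ℤ) : ℂ) / N = z * Complex.I := by
    simp only [z]; push_cast; ring
  rw [h₁, h₂]
  field_simp

theorem Lmat_add_mul (μ r : ℤ × ℤ) :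
    Lmat N (μ + ((N : ℤ) * r.1, (N : ℤ) * r.2)) =
      ((-1 : ℂ) ^ ((μ.1 + 1) * r.2 + (μ.2 + 1) * r.1 + (N : ℤ) * r.1 * r.2)) • Lmat N μ := by
  have hsign : (-1 : ℂ) ^ ((μ.1 + 1) * r.2 + (μ.2 + 1) * r.1 + (N : ℤ) * r.1 * r.2) =
      (-1 : ℂ) ^ (μ.1 * r.2 + μ.2 * r.1 + (N : ℤ) * r.1 * r.2) * ((-1 : ℂ) ^ r.1 * (-1) ^ r.2) := by
    rw [← zpow_add₀ (by norm_num), ← zpow_add₀ (by norm_num)]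
    ring_nf
  have hexp : Complex.exp (Real.pi * Complex.I *
        (((μ.1 + (N : ℤ) * r.1) * (μ.2 + (N : ℤ) * r.2) : ℤ) : ℂ) / N) =
      (-1 : ℂ) ^ (μ.1 * r.2 + μ.2 * r.1 + (N : ℤ) * r.1 * r.2) *
        Complex.exp (Real.pi * Complex.I * ((μ.1 * μ.2 : ℤ) : ℂ) / N) := by
    have hN : (N : ℂ) ≠ 0 := NeZero.ne _
    rw [← Complex.exp_pi_mul_I, ← Complex.exp_int_mul, ← Complex.exp_add]
    congr 1
    push_cast
    field_simp
    ring
  simp only [Lmat, Prod.fst_add, Prod.snd_add,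
    mzpow_add_mul_of_pow_eq_neg_one (NeZero.ne N) clockS_pow_self,
    mzpow_add_mul_of_pow_eq_neg_one (NeZero.ne N) shiftT_pow_self, smul_mul_smul_comm, hexp,
    hsign, smul_smul]
  ring_nf

theorem trace_clockS_pow_mul_shiftT_pow {a b : ℕ} (ha : a < N) (hb : b < N)
    (hab : (a, b) ≠ (0, 0)) : trace (clockS N ^ a * shiftT N ^ b) = 0 := by
  rcases Nat.eq_zero_or_pos b with rfl | hb₀
  · have ha₀ : a ≠ 0 := by rintro rfl; exact hab rfl
    have hω := isPrimitiveRoot_exp_two_pi_I_div N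
    rw [pow_zero, mul_one, clockS, Matrix.diagonal_pow, Matrix.trace_diagonal]
    simp only [Pi.pow_apply, mul_pow, pow_right_comm _ _ a]
    rw [← Finset.mul_sum, Fin.sum_univ_eq_sum_range (fun k => (_ ^ a) ^ k),
      geom_sum_eq_zero_of_pow_eq_one (hω.pow_ne_one_of_pos_of_lt ha₀ ha)
        (by rw [pow_right_comm, hω.pow_eq_one, one_pow]), mul_zero]
  · refine Finset.sum_eq_zero fun j _ => ?_
    have hj := j.isLt
    rw [Matrix.diag_apply, clockS, Matrix.diagonal_pow, Matrix.diagonal_mul,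
      shiftT_pow_apply hb.le, Nat.mod_eq_ite_of_lt_two_mul (by omega),
      if_neg (by split_ifs <;> omega), mul_zero]

theorem trace_Lmat {m : ℤ × ℤ} (hm : ¬((N : ℤ) ∣ m.1 ∧ (N : ℤ) ∣ m.2)) :
    trace (Lmat N m) = 0 := by
  have hN : (0 : ℤ) < N := by exact_mod_cast Nat.pos_of_neZero N
  obtain ⟨a, ha⟩ := Int.eq_ofNat_of_zero_le (Int.emod_nonneg m.1 hN.ne')
  obtain ⟨b, hb⟩ := Int.eq_ofNat_of_zero_le (Int.emod_nonneg m.2 hN.ne')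
  have haN : a < N := by have := Int.emod_lt_of_pos m.1 hN; omega
  have hbN : b < N := by have := Int.emod_lt_of_pos m.2 hN; omega
  have hab : (a, b) ≠ (0, 0) := by
    intro h
    simp only [Prod.mk.injEq] at h
    exact hm ⟨Int.dvd_of_emod_eq_zero (by omega), Int.dvd_of_emod_eq_zero (by omega)⟩
  set r : ℤ × ℤ := (m.1 / N, m.2 / N)
  have hm' : m = ((a : ℤ), (b : ℤ)) + ((N : ℤ) * r.1, (N : ℤ) * r.2) := by
    ext
    · rw [Prod.fst_add, ← ha, Int.emod_add_mul_ediv]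
    · rw [Prod.snd_add, ← hb, Int.emod_add_mul_ediv]
  rw [hm', Lmat_add_mul, trace_smul, Lmat_natCast, trace_smul,
    trace_clockS_pow_mul_shiftT_pow haN hbN hab, smul_zero, smul_zero]

theorem sum_inv_pow_smul_clockS_pow (j : Fin N) :
    ∑ a ∈ Finset.range N, ((ζ * ω ^ (j : ℕ)) ^ a)⁻¹ • clockS N ^ a =
      (N : ℂ) • Matrix.single j j 1 := by
  have hω := isPrimitiveRoot_exp_two_pi_I_div N
  have hd : ∀ k : Fin N, ζ * ω ^ (k : ℕ) ≠ 0 := fun k =>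
    mul_ne_zero (Complex.exp_ne_zero _) (pow_ne_zero _ (Complex.exp_ne_zero _))
  have hgeom : ∀ l : Fin N,
      ∑ a ∈ Finset.range N, ((ζ * ω ^ (j : ℕ)) ^ a)⁻¹ * (ζ * ω ^ (l : ℕ)) ^ a =
        if l = j then (N : ℂ) else 0 := fun l => by
    simp only [← inv_pow, ← mul_pow, inv_mul_eq_div]
    split_ifs with hlj
    · simp [hlj, hd j]
    · refine geom_sum_eq_zero_of_pow_eq_one ?_ ?_
      · rw [Ne, div_eq_one_iff_eq (hd j)]
        exact fun h => hlj <| Fin.ext <|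
          hω.pow_inj l.isLt j.isLt (mul_left_cancel₀ (Complex.exp_ne_zero _) h)
      · rw [div_pow, clockS_entry_pow_self, clockS_entry_pow_self, div_self (by norm_num)]
  ext l l'
  simp only [Matrix.sum_apply, Matrix.smul_apply, clockS, Matrix.diagonal_pow,
    Matrix.diagonal_apply, Pi.pow_apply, smul_eq_mul, Matrix.single_apply]
  by_cases hll : l = l'
  · subst hll
    simp only [if_true, hgeom]
    rcases eq_or_ne l j with rfl | h
    · simp
    · simp [h, h.symm]
  · simp only [hll, if_false, mul_zero, Finset.sum_const_zero]
    rw [if_neg (fun h => hll (h.1.symm.trans h.2)), mul_zero]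

theorem single_mem_span_clockS_pow_mul_shiftT_pow (j k : Fin N) :
    Matrix.single j k 1 ∈
      Submodule.span ℂ {A | ∃ a < N, ∃ b < N, clockS N ^ a * shiftT N ^ b = A} := by
  set b : ℕ := ((k - j : Fin N) : ℕ)
  have hk : ((j : ℕ) + b) % N = k := by rw [← Fin.val_add, add_sub_cancel]
  set ε : ℂ := if (j : ℕ) + b < N then 1 else -1
  have hε : ε ^ 2 = 1 := by simp only [ε]; split_ifs <;> norm_num
  have hsum : ∑ a ∈ Finset.range N, ((ζ * ω ^ (j : ℕ)) ^ a)⁻¹ • (clockS N ^ a * shiftT N ^ b) =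
      (N * ε : ℂ) • Matrix.single j k 1 := by
    simp only [← smul_mul_assoc]
    rw [← Finset.sum_mul, sum_inv_pow_smul_clockS_pow, smul_mul_assoc,
      single_mul_shiftT_pow (b.le_of_lt (k - j).isLt) hk, smul_smul]
  have hsingle : Matrix.single j k 1 = (ε / N) •
      ∑ a ∈ Finset.range N, ((ζ * ω ^ (j : ℕ)) ^ a)⁻¹ • (clockS N ^ a * shiftT N ^ b) := by
    have hN : (N : ℂ) ≠ 0 := NeZero.ne _
    rw [hsum, smul_smul, show ε / N * (N * ε) = 1 by field_simp; exact hε, one_smul]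
  rw [hsingle]
  exact Submodule.smul_mem _ _ (Submodule.sum_mem _ fun a ha => Submodule.smul_mem _ _
    (Submodule.subset_span ⟨a, Finset.mem_range.mp ha, b, (k - j).isLt, rfl⟩))

theorem span_clockS_pow_mul_shiftT_pow :
    Submodule.span ℂ {A | ∃ a < N, ∃ b < N, clockS N ^ a * shiftT N ^ b = A} = ⊤ := by
  refine eq_top_iff.mpr fun B _ => ?_
  rw [Matrix.matrix_eq_sum_single B]
  refine Submodule.sum_mem _ fun i _ => Submodule.sum_mem _ fun j _ => ?_
  rw [← mul_one (B i j), ← smul_eq_mul, ← Matrix.smul_single]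
  exact Submodule.smul_mem _ _ (single_mem_span_clockS_pow_mul_shiftT_pow i j)

end ClockShift

section Chi

variable {N : ℕ}

/-- The image of `E_m`. The paper's sign on `E_{μ+Nr}` is already built into `L_{μ+Nr}`
(`Lmat_add_mul`), so `m` need not be reduced to the box `0 ≤ μ₁, μ₂ < N`. -/
noncomputable def chiGen (N : ℕ) (m : ℤ × ℤ) : Matrix (Fin N) (Fin N) ℂ :=
  if (N : ℤ) ∣ m.1 ∧ (N : ℤ) ∣ m.2 then 0 else Lmat N m

noncomputable def chiN (N : ℕ) : ((ℤ × ℤ) →₀ ℂ) →ₗ[ℂ] Matrix (Fin N) (Fin N) ℂ :=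
  Finsupp.linearCombination ℂ (chiGen N)

theorem chiN_single (m : ℤ × ℤ) : chiN N (Finsupp.single m 1) = chiGen N m := by
  rw [chiN, Finsupp.linearCombination_single, one_smul]

theorem chiGen_of_dvd {m : ℤ × ℤ} (hm : (N : ℤ) ∣ m.1 ∧ (N : ℤ) ∣ m.2) : chiGen N m = 0 :=
  if_pos hm

theorem chiGen_of_not_dvd {m : ℤ × ℤ} (hm : ¬((N : ℤ) ∣ m.1 ∧ (N : ℤ) ∣ m.2)) :
    chiGen N m = Lmat N m :=
  if_neg hm

theorem not_dvd_of_mem_box {μ : ℤ × ℤ} (h₁ : 0 ≤ μ.1) (h₂ : μ.1 < N) (h₃ : 0 ≤ μ.2)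
    (h₄ : μ.2 < N) (hμ : μ ≠ (0, 0)) (r : ℤ × ℤ) :
    ¬((N : ℤ) ∣ (μ + ((N : ℤ) * r.1, (N : ℤ) * r.2)).1 ∧
      (N : ℤ) ∣ (μ + ((N : ℤ) * r.1, (N : ℤ) * r.2)).2) := by
  rintro ⟨hd₁, hd₂⟩
  rw [Prod.fst_add, dvd_add_left (dvd_mul_right _ _)] at hd₁
  rw [Prod.snd_add, dvd_add_left (dvd_mul_right _ _)] at hd₂
  exact hμ (Prod.ext (Int.eq_zero_of_dvd_of_nonneg_of_lt h₁ h₂ hd₁)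
    (Int.eq_zero_of_dvd_of_nonneg_of_lt h₃ h₄ hd₂))

variable [NeZero N]

theorem chiGen_lie (m n : ℤ × ℤ) :
    chiGen N m * chiGen N n - chiGen N n * chiGen N m = moyalCoeff N m n • chiGen N (m + n) := by
  by_cases hm : (N : ℤ) ∣ m.1 ∧ (N : ℤ) ∣ m.2
  · rw [chiGen_of_dvd hm, moyalCoeff_eq_zero_of_dvd
      (dvd_sub (hm.1.mul_right _) (hm.2.mul_right _))]
    simp
  by_cases hn : (N : ℤ) ∣ n.1 ∧ (N : ℤ) ∣ n.2
  · rw [chiGen_of_dvd hn, moyalCoeff_eq_zero_of_dvd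
      (dvd_sub (hn.2.mul_left _) (hn.1.mul_left _))]
    simp
  rw [chiGen_of_not_dvd hm, chiGen_of_not_dvd hn, Lmat_lie]
  by_cases hmn : (N : ℤ) ∣ (m + n).1 ∧ (N : ℤ) ∣ (m + n).2
  · have hcross : m.1 * n.2 - m.2 * n.1 = m.1 * (m + n).2 - m.2 * (m + n).1 := by
      simp only [Prod.fst_add, Prod.snd_add]; ring
    rw [moyalCoeff_eq_zero_of_dvd (hcross ▸ dvd_sub (hmn.2.mul_left _) (hmn.1.mul_left _)),
      zero_smul, zero_smul]
  · rw [chiGen_of_not_dvd hmn]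

theorem chiN_trigBracket (x y : (ℤ × ℤ) →₀ ℂ) :
    chiN N (trigBracket N x y) = chiN N x * chiN N y - chiN N y * chiN N x :=
  linearCombination_trigBracket chiGen_lie x y

theorem trace_chiN (x : (ℤ × ℤ) →₀ ℂ) : trace (chiN N x) = 0 := by
  have hgen : ∀ m, trace (chiGen N m) = 0 := fun m => by
    by_cases hm : (N : ℤ) ∣ m.1 ∧ (N : ℤ) ∣ m.2
    · rw [chiGen_of_dvd hm, trace_zero]
    · rw [chiGen_of_not_dvd hm, trace_Lmat hm]
  rw [chiN, Finsupp.linearCombination_apply, Finsupp.sum, trace_sum]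
  exact Finset.sum_eq_zero fun m _ => by rw [trace_smul, hgen, smul_zero]

theorem clockS_pow_mul_shiftT_pow_mem_range_chiN {a b : ℕ} (ha : a < N) (hb : b < N)
    (hab : (a, b) ≠ (0, 0)) : clockS N ^ a * shiftT N ^ b ∈ LinearMap.range (chiN N) := by
  set c : ℂ := Complex.I * N / (2 * Real.pi) *
    Complex.exp (Real.pi * Complex.I * ((a * b : ℤ) : ℂ) / N)
  have hc : c ≠ 0 := by
    simp [c, Complex.exp_ne_zero, Complex.I_ne_zero, Real.pi_ne_zero, NeZero.ne N]
  have hdvd := not_dvd_of_mem_box (N := N) (μ := ((a : ℤ), (b : ℤ))) (Int.natCast_nonneg a)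
    (Int.ofNat_lt.mpr ha) (Int.natCast_nonneg b) (Int.ofNat_lt.mpr hb) (by simpa using hab) 0
  simp only [Prod.snd_zero, Prod.fst_zero, mul_zero, Prod.mk_zero_zero, add_zero] at hdvd
  have himage :
      chiN N (Finsupp.single ((a : ℤ), (b : ℤ)) 1) = c • (clockS N ^ a * shiftT N ^ b) := by
    rw [chiN_single, chiGen_of_not_dvd hdvd, Lmat_natCast]
  exact ⟨c⁻¹ • Finsupp.single _ 1, by rw [map_smul, himage, inv_smul_smul₀ hc]⟩

theorem range_chiN : Set.range (chiN N) = {A | trace A = 0} := by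
  refine Set.Subset.antisymm (Set.range_subset_iff.mpr trace_chiN) fun A hA =>
    Matrix.mem_of_sup_span_one_eq_top_of_trace_eq_zero (U := LinearMap.range (chiN N))
      (by rintro _ ⟨x, rfl⟩; exact trace_chiN x) ?_ hA
  refine eq_top_iff.mpr (span_clockS_pow_mul_shiftT_pow.symm.le.trans (Submodule.span_le.mpr ?_))
  rintro _ ⟨a, ha, b, hb, rfl⟩
  rcases eq_or_ne (a, b) (0, 0) with hab | hab
  · simp only [Prod.mk.injEq] at hab
    rw [hab.1, hab.2, pow_zero, pow_zero, one_mul]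
    exact Submodule.mem_sup_right (Submodule.mem_span_singleton_self 1)
  · exact Submodule.mem_sup_left (clockS_pow_mul_shiftT_pow_mem_range_chiN ha hb hab)

end Chi

/-- The map `χ_N` with `E_{μ+Nr} ↦ (-1)^{(μ₁+1)r₂+(μ₂+1)r₁+Nr₁r₂} L_μ`
(for `0 ≤ μ₁,μ₂ ≤ N-1`, `μ ≠ (0,0)`) and `E_{Nr} ↦ 0` extends to a linear map
that respects the brackets and maps onto `sl(N,ℂ)`. -/
theorem chiN_lie_algebra_hom_onto_sl (N : ℕ) (hN : 2 ≤ N) :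
    ∃ χ : ((ℤ × ℤ) →₀ ℂ) →ₗ[ℂ] Matrix (Fin N) (Fin N) ℂ,
      (∀ μ r : ℤ × ℤ, 0 ≤ μ.1 → μ.1 < N → 0 ≤ μ.2 → μ.2 < N → μ ≠ (0, 0) →
        χ (Finsupp.single (μ + ((N : ℤ) * r.1, (N : ℤ) * r.2)) 1) =
          ((-1 : ℂ) ^ ((μ.1 + 1) * r.2 + (μ.2 + 1) * r.1 + (N : ℤ) * r.1 * r.2)) • Lmat N μ) ∧
      (∀ r : ℤ × ℤ, χ (Finsupp.single ((N : ℤ) * r.1, (N : ℤ) * r.2) 1) = 0) ∧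
      (∀ x y : (ℤ × ℤ) →₀ ℂ, χ (trigBracket N x y) = χ x * χ y - χ y * χ x) ∧
      Set.range χ = {A : Matrix (Fin N) (Fin N) ℂ | Matrix.trace A = 0} := by
  have : NeZero N := ⟨by omega⟩
  refine ⟨chiN N, fun μ r h₁ h₂ h₃ h₄ hμ => ?_, fun r => ?_, chiN_trigBracket, range_chiN⟩
  · rw [chiN_single, chiGen_of_not_dvd (not_dvd_of_mem_box h₁ h₂ h₃ h₄ hμ r), Lmat_add_mul]
  · rw [chiN_single, chiGen_of_dvd ⟨dvd_mul_right _ _, dvd_mul_right _ _⟩]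
end

section
/- The bracket {E_m, E_n} := (N/π) sin((π/N)(m₁n₂ - m₂n₁)) E_{m+n} on the free complex vector space spanned by {E_m : m ∈ ℤ×ℤ} satisfies the Jacobi identity and antisymmetry, hence defines a Lie algebra structure. -/
/-!
Antisymmetry and the Jacobi identity are additive in each argument, so it suffices to check
them on basis vectors `E_m`, where they become the antisymmetry of the structure constants
`c(m,n) = (N/π) sin ω(m,n)` and the cyclic condition on them. Since `ω = (π/N) (m × n)` is
additive in each slot and antisymmetric, with `A = ω(m,n)`, `B = ω(n,p)`, `C = ω(p,m)` one has
`ω(m+n,p) = B - C`, `ω(n+p,m) = C - A`, `ω(p+m,n) = A - B`, and the cyclic condition is the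
trigonometric identity `sin A sin(B - C) + sin B sin(C - A) + sin C sin(A - B) = 0`.
-/

open Finsupp

theorem Finsupp.eq_zero_of_map_add_of_map_single {α R M : Type*} [AddZeroClass R] [AddGroup M]
    {f : (α →₀ R) → M} (hadd : ∀ x y, f (x + y) = f x + f y) (hsingle : ∀ m a, f (single m a) = 0)
    (x : α →₀ R) : f x = 0 :=
  DFunLike.congr_fun (addHom_ext (f := AddMonoidHom.mk' f hadd) (g := 0) hsingle) x

def IsCyclicJacobi {G R : Type*} [Add G] [CommRing R] (c : G → G → R) : Prop :=
  ∀ m n p, c m n * c (m + n) p + c n p * c (n + p) m + c p m * c (p + m) n = 0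

section StructBracket

variable {G R : Type*} [AddCommMonoid G] [CommRing R] (c : G → G → R)

noncomputable def structBracket (x y : G →₀ R) : G →₀ R :=
  x.sum fun m a => y.sum fun n b => single (m + n) (a * b * c m n)

theorem structBracket_single_single (m n : G) (a b : R) :
    structBracket c (single m a) (single n b) = single (m + n) (a * b * c m n) := by
  simp [structBracket]

theorem structBracket_add_left (x x' y : G →₀ R) :
    structBracket c (x + x') y = structBracket c x y + structBracket c x' y := by
  refine sum_add_index' (fun m => by simp) fun m a a' => ?_
  simp only [← sum_add, ← single_add, add_mul]

theorem structBracket_add_right (x y y' : G →₀ R) :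
    structBracket c x (y + y') = structBracket c x y + structBracket c x y' := by
  unfold structBracket
  rw [← sum_add]
  refine sum_congr fun m _ => sum_add_index' (fun n => by simp) fun n b b' => ?_
  simp only [← single_add, mul_add, add_mul]

theorem structBracket_antisymm (hc : ∀ m n, c n m = -c m n) (x y : G →₀ R) :
    structBracket c x y = -structBracket c y x := by
  rw [eq_neg_iff_add_eq_zero]
  revert x
  refine eq_zero_of_map_add_of_map_single (fun x x' => ?_) fun m a => ?_
  · simp only [structBracket_add_left, structBracket_add_right]; abel
  revert y
  refine eq_zero_of_map_add_of_map_single (fun y y' => ?_) fun n b => ?_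
  · simp only [structBracket_add_left, structBracket_add_right]; abel
  rw [structBracket_single_single, structBracket_single_single, hc m n, add_comm n m,
    ← single_add, single_eq_zero]
  ring

noncomputable def jacobiator (x y z : G →₀ R) : G →₀ R :=
  structBracket c (structBracket c x y) z + structBracket c (structBracket c y z) x +
    structBracket c (structBracket c z x) y

theorem jacobiator_single_single_single (m n p : G) (a b d : R) :
    jacobiator c (single m a) (single n b) (single p d) =
      single (m + n + p)
        (a * b * d * (c m n * c (m + n) p + c n p * c (n + p) m + c p m * c (p + m) n)) := by
  simp only [jacobiator, structBracket_single_single]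
  rw [add_rotate n p m, add_rotate p m n, ← single_add, ← single_add]
  congr 1
  ring

theorem jacobiator_eq_zero (hc : IsCyclicJacobi c) (x y z : G →₀ R) : jacobiator c x y z = 0 := by
  revert x
  refine eq_zero_of_map_add_of_map_single (fun x x' => ?_) fun m a => ?_
  · simp only [jacobiator, structBracket_add_left, structBracket_add_right]; abel
  revert y
  refine eq_zero_of_map_add_of_map_single (fun y y' => ?_) fun n b => ?_
  · simp only [jacobiator, structBracket_add_left, structBracket_add_right]; abel
  revert z
  refine eq_zero_of_map_add_of_map_single (fun z z' => ?_) fun p d => ?_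
  · simp only [jacobiator, structBracket_add_left, structBracket_add_right]; abel
  rw [jacobiator_single_single_single, hc, mul_zero, single_zero]

end StructBracket

theorem Complex.sin_mul_sin_sub_add_cyclic (A B C : ℂ) :
    sin A * sin (B - C) + sin B * sin (C - A) + sin C * sin (A - B) = 0 := by
  simp only [sin_sub]
  ring

section SineStructConst

variable {G : Type*} {K : ℂ} {ω : G → G → ℂ}

theorem sin_structConst_antisymm (hanti : ∀ m n, ω n m = -ω m n) (m n : G) :
    K * Complex.sin (ω n m) = -(K * Complex.sin (ω m n)) := by
  rw [hanti, Complex.sin_neg, mul_neg]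

theorem isCyclicJacobi_sin_structConst [Add G] (hadd : ∀ m n p, ω (m + n) p = ω m p + ω n p)
    (hanti : ∀ m n, ω n m = -ω m n) : IsCyclicJacobi fun m n => K * Complex.sin (ω m n) := by
  intro m n p
  have hmn : ω (m + n) p = ω n p - ω p m := by rw [hadd, hanti p m]; ring
  have hnp : ω (n + p) m = ω p m - ω m n := by rw [hadd, hanti m n]; ring
  have hpm : ω (p + m) n = ω m n - ω n p := by rw [hadd, hanti n p]; ring
  simp only [hmn, hnp, hpm]
  linear_combination K ^ 2 * Complex.sin_mul_sin_sub_add_cyclic (ω m n) (ω n p) (ω p m)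

end SineStructConst

def cross (m n : ℤ × ℤ) : ℤ := m.1 * n.2 - m.2 * n.1

theorem cross_add_left (m n p : ℤ × ℤ) : cross (m + n) p = cross m p + cross n p := by
  simp only [cross, Prod.fst_add, Prod.snd_add]
  ring

theorem cross_swap (m n : ℤ × ℤ) : cross n m = -cross m n := by
  simp only [cross]
  ring

theorem trigBracket_eq_structBracket (N : ℕ) :
    trigBracket N =
      structBracket fun m n => (N / Real.pi : ℂ) * Complex.sin (Real.pi / N * cross m n) :=
  rfl

theorem trigBracket_antisymm_jacobi_general (N : ℕ) :
    (∀ x y : (ℤ × ℤ) →₀ ℂ, trigBracket N x y = -trigBracket N y x) ∧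
    (∀ x y z : (ℤ × ℤ) →₀ ℂ,
      trigBracket N (trigBracket N x y) z + trigBracket N (trigBracket N y z) x +
        trigBracket N (trigBracket N z x) y = 0) := by
  have hadd (m n p : ℤ × ℤ) : (Real.pi / N * cross (m + n) p : ℂ) =
      Real.pi / N * cross m p + Real.pi / N * cross n p := by
    rw [cross_add_left]; push_cast; ring
  have hanti (m n : ℤ × ℤ) : (Real.pi / N * cross n m : ℂ) = -(Real.pi / N * cross m n) := by
    rw [cross_swap]; push_cast; ring
  rw [trigBracket_eq_structBracket]
  exact ⟨structBracket_antisymm _ (sin_structConst_antisymm hanti),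
    jacobiator_eq_zero _ (isCyclicJacobi_sin_structConst hadd hanti)⟩

/-- The trigonometric bracket is antisymmetric and satisfies the Jacobi identity,
hence defines a Lie algebra structure on the free vector space spanned by the `E_m`. -/
theorem trigBracket_antisymm_jacobi (N : ℕ) (hN : 2 ≤ N) :
    (∀ x y : (ℤ × ℤ) →₀ ℂ, trigBracket N x y = -trigBracket N y x) ∧
    (∀ x y z : (ℤ × ℤ) →₀ ℂ,
      trigBracket N (trigBracket N x y) z + trigBracket N (trigBracket N y z) x +
        trigBracket N (trigBracket N z x) y = 0) :=
  trigBracket_antisymm_jacobi_general N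
end
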